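/- Let V be a reflexive complex Banach space with continuous dual space V*, let W be a complex Banach space, let K : V → V* be a compact bounded linear operator, and let T : V → W be an injective bounded linear operator. Then for every ε > 0 there exists a constant C_ε > 0 such that |(K u)(u)| ≤ ε‖u‖_V² + C_ε‖T u‖_W² for all u ∈ V. -/

import Mathlib

/-!
If the estimate failed for some `ε`, there would be unit vectors `vₙ` with
`ε + n ‖T vₙ‖² < |(K vₙ) vₙ| ≤ ‖K vₙ‖`, so `T vₙ → 0`. Reflexivity and Banach–Alaoglu give a
weak limit `u` of `vₙ` along an ultrafilter (standing in for a subsequence, as the weak topology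
need not be sequential here); then `T u = 0`, so `u = 0`, and compactness of `K` upgrades
`K vₙ ⇀ 0` to `‖K vₙ‖ → 0`, contradicting `‖K vₙ‖ > ε`.
-/

open Filter Topology Metric NormedSpace

section WeakConvergence

variable (𝕜 : Type*) {V W ι : Type*} [RCLike 𝕜]
  [NormedAddCommGroup V] [NormedSpace 𝕜 V] [NormedAddCommGroup W] [NormedSpace 𝕜 W]

/-- Convergence in `WeakSpace 𝕜 V`, unfolded. -/
def TendstoWeakly (v : ι → V) (l : Filter ι) (u : V) : Prop :=
  ∀ f : StrongDual 𝕜 V, Tendsto (fun i ↦ f (v i)) l (𝓝 (f u))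

variable {𝕜}

theorem Filter.Tendsto.tendstoWeakly {v : ι → V} {l : Filter ι} {u : V}
    (h : Tendsto v l (𝓝 u)) : TendstoWeakly 𝕜 v l u :=
  fun f ↦ (f.continuous.tendsto u).comp h

theorem TendstoWeakly.map {v : ι → V} {l : Filter ι} {u : V} (h : TendstoWeakly 𝕜 v l u)
    (T : V →L[𝕜] W) : TendstoWeakly 𝕜 (fun i ↦ T (v i)) l (T u) :=
  fun f ↦ h (f ∘L T)

theorem TendstoWeakly.unique {v : ι → V} {l : Filter ι} [l.NeBot] {u u' : V}
    (h : TendstoWeakly 𝕜 v l u) (h' : TendstoWeakly 𝕜 v l u') : u = u' :=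
  SeparatingDual.eq_iff_forall_dual_eq.2 fun f ↦ tendsto_nhds_unique (h f) (h' f)

/-- Banach–Alaoglu in the bidual, pulled back to `V` by reflexivity. -/
theorem exists_tendstoWeakly_of_surjective_inclusionInDoubleDual
    (hrefl : Function.Surjective (inclusionInDoubleDual 𝕜 V)) (𝒰 : Ultrafilter ι)
    {v : ι → V} {R : ℝ} (hv : ∀ i, ‖v i‖ ≤ R) : ∃ u, TendstoWeakly 𝕜 v 𝒰 u := by
  let j : ι → WeakDual 𝕜 (StrongDual 𝕜 V) :=
    fun i ↦ StrongDual.toWeakDual (inclusionInDoubleDual 𝕜 V (v i))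
  have hj : ∀ i, WeakDual.toStrongDual (j i) ∈ closedBall 0 R := fun i ↦
    (mem_closedBall_zero_iff (E := StrongDual 𝕜 (StrongDual 𝕜 V))).2 <|
      (double_dual_bound 𝕜 V (v i)).trans (hv i)
  obtain ⟨x, -, hx⟩ := (WeakDual.isCompact_closedBall 0 R).ultrafilter_le_nhds (𝒰.map j)
    (le_principal_iff.2 <| Ultrafilter.mem_map.2 <| univ_mem' hj)
  obtain ⟨u, hu⟩ := hrefl (WeakDual.toStrongDual x)
  refine ⟨u, fun f ↦ ?_⟩
  have hfu : f u = x f := by rw [← dual_def 𝕜 V u f, hu]; rfl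
  rw [hfu]
  exact ((WeakDual.eval_continuous f).tendsto x).comp hx

end WeakConvergence

section CompactOperator

variable {𝕜 V E W ι : Type*} [RCLike 𝕜]
  [NormedAddCommGroup V] [NormedSpace 𝕜 V] [NormedAddCommGroup E] [NormedSpace 𝕜 E]
  [NormedAddCommGroup W] [NormedSpace 𝕜 W]

theorem IsCompactOperator.tendsto_of_tendstoWeakly {K : V →L[𝕜] E} (hK : IsCompactOperator K)
    {𝒰 : Ultrafilter ι} {v : ι → V} {u : V} {R : ℝ} (hv : ∀ i, ‖v i‖ ≤ R)
    (hvu : TendstoWeakly 𝕜 v 𝒰 u) : Tendsto (fun i ↦ K (v i)) 𝒰 (𝓝 (K u)) := by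
  have hKv : ∀ i, K (v i) ∈ closure (K '' closedBall 0 R) := fun i ↦
    subset_closure ⟨v i, mem_closedBall_zero_iff.2 (hv i), rfl⟩
  obtain ⟨g, -, hg⟩ := (hK.isCompact_closure_image_closedBall R).ultrafilter_le_nhds
    (𝒰.map fun i ↦ K (v i)) (le_principal_iff.2 <| Ultrafilter.mem_map.2 <| univ_mem' hKv)
  -- the norm cluster point that compactness provides must be the weak limit `K u`
  have hgK : K u = g := (hvu.map K).unique (Tendsto.tendstoWeakly hg)
  rwa [hgK]

theorem IsCompactOperator.tendsto_zero_of_tendsto_zero_comp_injective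
    (hrefl : Function.Surjective (inclusionInDoubleDual 𝕜 V))
    {K : V →L[𝕜] E} (hK : IsCompactOperator K) {T : V →L[𝕜] W} (hT : Function.Injective T)
    {𝒰 : Ultrafilter ι} {v : ι → V} {R : ℝ} (hv : ∀ i, ‖v i‖ ≤ R)
    (hTv : Tendsto (fun i ↦ T (v i)) 𝒰 (𝓝 0)) : Tendsto (fun i ↦ K (v i)) 𝒰 (𝓝 0) := by
  obtain ⟨u, hvu⟩ := exists_tendstoWeakly_of_surjective_inclusionInDoubleDual hrefl 𝒰 hv
  have hu : u = 0 := hT <| by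
    rw [map_zero]
    exact (hvu.map T).unique hTv.tendstoWeakly
  simpa [hu] using hK.tendsto_of_tendstoWeakly hv hvu

end CompactOperator

theorem norm_apply_self_le_of_forall_norm_eq_one {𝕜 V W : Type*} [RCLike 𝕜]
    [NormedAddCommGroup V] [NormedSpace 𝕜 V] [NormedAddCommGroup W] [NormedSpace 𝕜 W]
    (B : V →L[𝕜] V →L[𝕜] 𝕜) (T : V →L[𝕜] W) {ε C : ℝ}
    (h : ∀ v, ‖v‖ = 1 → ‖B v v‖ ≤ ε + C * ‖T v‖ ^ 2) (u : V) :
    ‖B u u‖ ≤ ε * ‖u‖ ^ 2 + C * ‖T u‖ ^ 2 := by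
  rcases eq_or_ne u 0 with rfl | hu
  · simp
  have hunit := h ((‖u‖⁻¹ : 𝕜) • u) (norm_smul_inv_norm hu)
  simp only [map_smul, smul_apply, smul_eq_mul, norm_mul, norm_smul,
    norm_inv, RCLike.norm_ofReal, abs_norm] at hunit
  field_simp at hunit
  linarith

theorem tendsto_zero_of_forall_mul_sq_norm_le {E : Type*} [SeminormedAddGroup E] {x : ℕ → E}
    {M : ℝ} (h : ∀ n : ℕ, (n + 1) * ‖x n‖ ^ 2 ≤ M) : Tendsto x atTop (𝓝 0) := by
  have hM : Tendsto (fun n : ℕ ↦ √(M / (n + 1))) atTop (𝓝 0) := by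
    simpa using ((tendsto_const_div_atTop_nhds_zero_nat M).comp (tendsto_add_atTop_nat 1)).sqrt
  refine squeeze_zero_norm (fun n ↦ Real.le_sqrt_of_sq_le ?_) hM
  rw [le_div_iff₀ (by positivity)]
  linarith [h n]

theorem compact_quadratic_form_estimate_general
    {V W : Type*} [NormedAddCommGroup V] [NormedSpace ℂ V]
    [NormedAddCommGroup W] [NormedSpace ℂ W]
    (hrefl : Function.Surjective (NormedSpace.inclusionInDoubleDual ℂ V))
    (K : V →L[ℂ] StrongDual ℂ V) (hK : IsCompactOperator K)
    (T : V →L[ℂ] W) (hT : Function.Injective T) :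
    ∀ ε > 0, ∃ C > 0, ∀ u : V, ‖K u u‖ ≤ ε * ‖u‖ ^ 2 + C * ‖T u‖ ^ 2 := by
  intro ε hε
  by_contra! hcon
  have hbad : ∀ n : ℕ, ∃ v : V, ‖v‖ = 1 ∧ ε + (n + 1) * ‖T v‖ ^ 2 < ‖K v v‖ := fun n ↦ by
    by_contra! h
    obtain ⟨u, hu⟩ := hcon (n + 1) (by positivity)
    exact hu.not_ge (norm_apply_self_le_of_forall_norm_eq_one K T h u)
  choose v hv_norm hv_bad using hbad
  have hKv_le : ∀ n, ‖K (v n) (v n)‖ ≤ ‖K (v n)‖ := fun n ↦ by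
    simpa [hv_norm n] using (K (v n)).le_opNorm (v n)
  have hTv : Tendsto (fun n ↦ T (v n)) atTop (𝓝 0) :=
    tendsto_zero_of_forall_mul_sq_norm_le fun n ↦ by
      have := K.le_opNorm (v n)
      rw [hv_norm n, mul_one] at this
      linarith [hv_bad n, hKv_le n]
  have hKv : Tendsto (fun n ↦ K (v n)) (Ultrafilter.of (atTop : Filter ℕ) : Filter ℕ) (𝓝 0) :=
    hK.tendsto_zero_of_tendsto_zero_comp_injective hrefl hT (fun n ↦ (hv_norm n).le)
      (hTv.mono_left (Ultrafilter.of_le _))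
  obtain ⟨n, hn⟩ := (hKv.eventually (ball_mem_nhds 0 hε)).exists
  rw [dist_zero_right] at hn
  nlinarith [hv_bad n, hKv_le n, sq_nonneg ‖T (v n)‖]

/-- **Lemma 4.2 (Gesztesy–Mitrea).**
Let `V` be a reflexive complex Banach space with continuous dual `V*`, `W` a complex Banach
space, `K : V → V*` a compact bounded linear operator and `T : V → W` an injective bounded
linear operator. Then for every `ε > 0` there is `C_ε > 0` with
`|⟨u, K u⟩| ≤ ε ‖u‖² + C_ε ‖T u‖²` for all `u ∈ V`. -/
theorem compact_quadratic_form_estimate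
    {V W : Type*} [NormedAddCommGroup V] [NormedSpace ℂ V] [CompleteSpace V]
    [NormedAddCommGroup W] [NormedSpace ℂ W] [CompleteSpace W]
    (hrefl : Function.Surjective (NormedSpace.inclusionInDoubleDual ℂ V))
    (K : V →L[ℂ] StrongDual ℂ V) (hK : IsCompactOperator K)
    (T : V →L[ℂ] W) (hT : Function.Injective T) :
    ∀ ε > 0, ∃ C > 0, ∀ u : V, ‖K u u‖ ≤ ε * ‖u‖ ^ 2 + C * ‖T u‖ ^ 2 :=
  compact_quadratic_form_estimate_general hrefl K hK T hT
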